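/- arXiv:0907.5381 — 7 statements merged into one kernel-verified Lean document; each statement's English description precedes it below -/
import Mathlib

section
/- Let V be a 6-dimensional complex vector space, equipped with the symplectic form on ⋀³V given by (α, β) ↦ vol(α ∧ β) for a fixed isomorphism vol : ⋀⁶V ≅ ℂ. For each nonzero v ∈ V, the subspace F_v = {v ∧ α : α ∈ ⋀²V} of ⋀³V is isotropic of dimension 10, hence Lagrangian. -/
/-!
Choose `f ∈ V*` with `f v = 1`. Left multiplication by `v` maps `⋀ᵏ (ker f)` isomorphically onto
`v ∧ ⋀ᵏ V`: replacing every factor `x` by `x - f x • v` does not change `v ∧ a`, which gives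
surjectivity, and contraction with `f` is a left inverse on `v ∧ ⋀ᵏ (ker f)`. Hence
`dim F_v = C(5, 2) = 10`. Isotropy holds because `v ∧ a ∧ v = 0` for every `a`.
-/

open Module ExteriorAlgebra

namespace ExteriorAlgebra

variable {R M N : Type*} [CommRing R] [AddCommGroup M] [Module R M] [AddCommGroup N] [Module R N]

theorem ι_mul_ι_comm (x y : M) : ι R x * ι R y = -(ι R y * ι R x) :=
  eq_neg_of_add_eq_zero_left (ι_add_mul_swap x y)

theorem ι_mul_mul_ι_self (v : M) (a : ExteriorAlgebra R M) : ι R v * a * ι R v = 0 := by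
  induction a using CliffordAlgebra.left_induction with
  | algebraMap r => rw [← Algebra.commutes, mul_assoc, ι_sq_zero, mul_zero]
  | add x y hx hy => rw [mul_add, add_mul, hx, hy, add_zero]
  | ι_mul x m hx =>
    rw [← mul_assoc, ι_mul_ι_comm, neg_mul, neg_mul, mul_assoc, mul_assoc, ← mul_assoc (ι R v),
      hx, mul_zero, neg_zero]

theorem ι_mul_mul_ι_mul (v : M) (a b : ExteriorAlgebra R M) : ι R v * a * (ι R v * b) = 0 := by
  rw [← mul_assoc, ι_mul_mul_ι_self, zero_mul]

theorem ι_mul_map_of_sub_mem_span {v : M} {g : M →ₗ[R] M} (hg : ∀ m, g m - m ∈ R ∙ v)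
    (a : ExteriorAlgebra R M) : ι R v * map g a = ι R v * a := by
  induction a using CliffordAlgebra.left_induction with
  | algebraMap r => rw [AlgHom.commutes]
  | add x y hx hy => rw [map_add, mul_add, mul_add, hx, hy]
  | ι_mul x m hx =>
    have hvm : ι R v * ι R (g m) = ι R v * ι R m := by
      obtain ⟨r, hr⟩ := Submodule.mem_span_singleton.mp (hg m)
      rw [← sub_eq_zero, ← mul_sub, ← map_sub, ← hr, map_smul, mul_smul_comm, ι_sq_zero, smul_zero]
    rw [map_mul, map_apply_ι, ← mul_assoc, hvm, ι_mul_ι_comm, neg_mul, mul_assoc, hx,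
      ← mul_assoc, ← neg_mul, ← ι_mul_ι_comm, mul_assoc]

open CliffordAlgebra in
theorem contractLeft_map_eq_zero {d : Dual R N} {g : M →ₗ[R] N} (hdg : d ∘ₗ g = 0)
    (a : ExteriorAlgebra R M) : contractLeft d (map g a) = 0 := by
  induction a using CliffordAlgebra.left_induction with
  | algebraMap r => rw [AlgHom.commutes, contractLeft_algebraMap]
  | add x y hx hy => rw [map_add, map_add, hx, hy, add_zero]
  | ι_mul x m hx =>
    rw [map_mul, map_apply_ι, contractLeft_ι_mul, hx, ← LinearMap.comp_apply, hdg,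
      LinearMap.zero_apply, zero_smul, mul_zero, sub_zero]

end ExteriorAlgebra

namespace exteriorPower

variable {R M N : Type*} [CommRing R] [AddCommGroup M] [Module R M] [AddCommGroup N] [Module R N]

theorem coe_map (k : ℕ) (g : M →ₗ[R] N) (a : ⋀[R]^k M) :
    (map k g a : ExteriorAlgebra R N) = ExteriorAlgebra.map g a := by
  have : (⋀[R]^k N).subtype ∘ₗ map k g =
      (ExteriorAlgebra.map g).toLinearMap ∘ₗ (⋀[R]^k M).subtype :=
    linearMap_ext (by ext m; simp [ExteriorAlgebra.map_apply_ιMulti])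
  exact LinearMap.congr_fun this a

end exteriorPower

section

variable {R M : Type*} [CommRing R] [AddCommGroup M] [Module R M]

namespace Module.Dual

variable (f : Dual R M) {v : M} (hfv : f v = 1)

def projKer : M →ₗ[R] LinearMap.ker f :=
  (LinearMap.id - f.smulRight v).codRestrict _ fun x =>
    LinearMap.mem_ker.mpr <| by simp [hfv]

theorem subtype_comp_projKer :
    (LinearMap.ker f).subtype ∘ₗ f.projKer hfv = LinearMap.id - f.smulRight v :=
  rfl

theorem projKer_comp_subtype : f.projKer hfv ∘ₗ (LinearMap.ker f).subtype = LinearMap.id :=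
  LinearMap.ext fun w => Subtype.ext <| by simp [projKer, LinearMap.mem_ker.mp w.2]

end Module.Dual

open CliffordAlgebra in
theorem finrank_map_mulLeft_ι_exteriorPower_eq {f : Dual R M} {v : M} (hfv : f v = 1) (k : ℕ) :
    finrank R ((⋀[R]^k M).map (LinearMap.mulLeft R (ι R v))) =
      finrank R (⋀[R]^k (LinearMap.ker f)) := by
  set L := LinearMap.mulLeft R (ι R v) ∘ₗ (⋀[R]^k M).subtype ∘ₗ
    exteriorPower.map k (LinearMap.ker f).subtype
  have hcontract : ∀ b, contractLeft f (L b) = exteriorPower.map k (LinearMap.ker f).subtype b := by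
    intro b
    simp only [L, LinearMap.comp_apply, LinearMap.mulLeft_apply, Submodule.subtype_apply]
    rw [contractLeft_ι_mul, exteriorPower.coe_map,
      contractLeft_map_eq_zero (LinearMap.comp_ker_subtype f), hfv, one_smul, mul_zero, sub_zero]
  have hinj : Function.Injective L := fun b c h =>
    exteriorPower.map_injective _ (f.projKer_comp_subtype hfv) <| Subtype.ext <| by
      simpa only [hcontract] using congrArg (contractLeft f) h
  have hrange : LinearMap.range L = (⋀[R]^k M).map (LinearMap.mulLeft R (ι R v)) := by
    apply le_antisymm
    · rintro _ ⟨b, rfl⟩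
      exact ⟨_, (exteriorPower.map k _ b).2, rfl⟩
    · rintro _ ⟨a, ha, rfl⟩
      refine ⟨exteriorPower.map k (f.projKer hfv) ⟨a, ha⟩, ?_⟩
      simp only [L, LinearMap.comp_apply, LinearMap.mulLeft_apply, Submodule.subtype_apply]
      rw [← LinearMap.comp_apply (exteriorPower.map k _), ← exteriorPower.map_comp,
        f.subtype_comp_projKer, exteriorPower.coe_map]
      exact ι_mul_map_of_sub_mem_span (fun m => by simp [Submodule.mem_span_singleton]) a
  rw [← hrange]
  exact (LinearEquiv.ofInjective L hinj).finrank_eq.symm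

theorem exteriorPower_map_mulLeft_ι_le (v : M) (k : ℕ) :
    (⋀[R]^k M).map (LinearMap.mulLeft R (ι R v)) ≤ ⋀[R]^(k + 1) M := by
  rintro _ ⟨a, ha, rfl⟩
  rw [exteriorPower, pow_succ']
  exact Submodule.mul_mem_mul (LinearMap.mem_range_self _ v) ha

theorem finrank_map_mulLeft_ι_exteriorPower {K V : Type*} [Field K] [AddCommGroup V] [Module K V]
    [FiniteDimensional K V] {v : V} (hv : v ≠ 0) (k : ℕ) :
    finrank K ((⋀[K]^k V).map (LinearMap.mulLeft K (ι K v))) = (finrank K V - 1).choose k := by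
  obtain ⟨f, hf⟩ := exists_dual_forall_apply_eq_one
    ((linearIndepOn_singleton_iff K (v := id)).mpr hv)
  have hfv : f v = 1 := hf v rfl
  have hf0 : f ≠ 0 := by rintro rfl; simp at hfv
  rw [finrank_map_mulLeft_ι_exteriorPower_eq hfv, exteriorPower.finrank_eq,
    ← f.finrank_ker_add_one_of_ne_zero hf0, Nat.add_sub_cancel]

end

/-- For a 6-dimensional complex vector space `V` with a fixed isomorphism
`vol : ⋀⁶V ≅ ℂ` inducing the symplectic form `(α, β) ↦ vol (α ∧ β)` on `⋀³V`,
and any nonzero `v ∈ V`, the subspace `F_v = v ∧ ⋀²V` of `⋀³V` is isotropic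
of dimension `10`, hence Lagrangian. -/
theorem statement0 (V : Type*) [AddCommGroup V] [Module ℂ V] [FiniteDimensional ℂ V]
    (hV : finrank ℂ V = 6)
    (vol : (⋀[ℂ]^6 V : Submodule ℂ (ExteriorAlgebra ℂ V)) ≃ₗ[ℂ] ℂ)
    (v : V) (hv : v ≠ 0)
    (Fv : Submodule ℂ (ExteriorAlgebra ℂ V))
    (hFv : Fv = (⋀[ℂ]^2 V : Submodule ℂ (ExteriorAlgebra ℂ V)).map
      (LinearMap.mulLeft ℂ (ExteriorAlgebra.ι ℂ v))) :
    Fv ≤ (⋀[ℂ]^3 V : Submodule ℂ (ExteriorAlgebra ℂ V)) ∧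
    finrank ℂ Fv = 10 ∧
    (∀ α ∈ Fv, ∀ β ∈ Fv,
      ∀ h : α * β ∈ (⋀[ℂ]^6 V : Submodule ℂ (ExteriorAlgebra ℂ V)),
        vol ⟨α * β, h⟩ = 0) := by
  subst hFv
  refine ⟨exteriorPower_map_mulLeft_ι_le v 2, ?_, ?_⟩
  · rw [finrank_map_mulLeft_ι_exteriorPower hv, hV]
    rfl
  · rintro _ ⟨a, -, rfl⟩ _ ⟨b, -, rfl⟩ h
    have hzero : (⟨_, h⟩ : ⋀[ℂ]^6 V) = 0 := Subtype.ext (ι_mul_mul_ι_mul v a b)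
    rw [hzero, map_zero]
end

section
/- Let U be a 4-dimensional complex vector space and V = ⋀²U (so dim V = 6), with the symplectic form on ⋀³V induced by wedge product. For any two nonzero u₀, u₁ ∈ U, the decomposable 3-vectors ι₊(u₀) = u₀ ∧ U and ι₊(u₁) = u₁ ∧ U in ⋀³V (i.e. the Plücker points of the 3-dimensional subspaces u₀ ∧ U and u₁ ∧ U of V) satisfy ι₊(u₀) ∧ ι₊(u₁) = 0; consequently the linear span A₊(U) of {ι₊(u) : u ∈ U, u ≠ 0} is an isotropic subspace of ⋀³V. -/
set_option synthInstance.maxHeartbeats 800000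
set_option maxHeartbeats 1000000
open Module ExteriorAlgebra

/-- `z` is a Plücker point of the 3-dimensional subspace `u ∧ U` of `V = ⋀²U`:
it is the wedge (in `⋀³V`) of three elements of `V` each of the form `u ∧ a`. -/
def IsPluckerPoint {U : Type*} [AddCommGroup U] [Module ℂ U] (u : U)
    (z : ExteriorAlgebra ℂ (⋀[ℂ]^2 U : Submodule ℂ (ExteriorAlgebra ℂ U))) : Prop :=
  ∃ x₁ x₂ x₃ : (⋀[ℂ]^2 U : Submodule ℂ (ExteriorAlgebra ℂ U)),
    (∃ a : U, (x₁ : ExteriorAlgebra ℂ U)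
        = ExteriorAlgebra.ι ℂ u * ExteriorAlgebra.ι ℂ a) ∧
    (∃ b : U, (x₂ : ExteriorAlgebra ℂ U)
        = ExteriorAlgebra.ι ℂ u * ExteriorAlgebra.ι ℂ b) ∧
    (∃ c : U, (x₃ : ExteriorAlgebra ℂ U)
        = ExteriorAlgebra.ι ℂ u * ExteriorAlgebra.ι ℂ c) ∧
    z = ExteriorAlgebra.ι ℂ x₁ * ExteriorAlgebra.ι ℂ x₂ * ExteriorAlgebra.ι ℂ x₃

/-- The linear map `a ↦ u ∧ a : U → ⋀²U`. -/
noncomputable def wedgeMap {U : Type*} [AddCommGroup U] [Module ℂ U] (u : U) :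
    U →ₗ[ℂ] (⋀[ℂ]^2 U : Submodule ℂ (ExteriorAlgebra ℂ U)) :=
  LinearMap.codRestrict _
    ((LinearMap.mulLeft ℂ (ExteriorAlgebra.ι ℂ u)).comp
      (ExteriorAlgebra.ι ℂ (M := U)))
    (fun a => by
      show ExteriorAlgebra.ι ℂ u * ExteriorAlgebra.ι ℂ a
        ∈ LinearMap.range (ExteriorAlgebra.ι ℂ : U →ₗ[ℂ] ExteriorAlgebra ℂ U) ^ 2
      rw [pow_two]
      exact Submodule.mul_mem_mul ⟨u, rfl⟩ ⟨a, rfl⟩)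

lemma wedgeMap_coe {U : Type*} [AddCommGroup U] [Module ℂ U] (u a : U) :
    (wedgeMap u a : ExteriorAlgebra ℂ U)
      = ExteriorAlgebra.ι ℂ u * ExteriorAlgebra.ι ℂ a := rfl

lemma wedgeMap_eq {U : Type*} [AddCommGroup U] [Module ℂ U] {u a : U}
    {x : (⋀[ℂ]^2 U : Submodule ℂ (ExteriorAlgebra ℂ U))}
    (h : (x : ExteriorAlgebra ℂ U) = ExteriorAlgebra.ι ℂ u * ExteriorAlgebra.ι ℂ a) :
    x = wedgeMap u a := Subtype.ext h

/-- wedge of 6 vectors lying in a subspace of dimension ≤ 5 vanishes. -/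
lemma wedge6_zero {V : Type*} [AddCommGroup V] [Module ℂ V] (f : Fin 6 → V)
    (W : Submodule ℂ V) [FiniteDimensional ℂ W] (hW : finrank ℂ W ≤ 5)
    (hf : ∀ i, f i ∈ W) : ExteriorAlgebra.ιMulti ℂ 6 f = 0 := by
  refine AlternatingMap.map_linearDependent _ f fun hli => ?_
  have h1 : Submodule.span ℂ (Set.range f) ≤ W :=
    Submodule.span_le.2 (by rintro _ ⟨i, rfl⟩; exact hf i)
  have h2 := finrank_span_eq_card hli
  have h3 : finrank ℂ (Submodule.span ℂ (Set.range f)) ≤ finrank ℂ W :=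
    Submodule.finrank_mono h1
  rw [h2] at h3
  simp only [Fintype.card_fin] at h3
  omega

lemma finrank_sup3_le {V : Type*} [AddCommGroup V] [Module ℂ V]
    (p q r : Submodule ℂ V) [FiniteDimensional ℂ p] [FiniteDimensional ℂ q]
    [FiniteDimensional ℂ r] :
    finrank ℂ (p ⊔ q ⊔ r : Submodule ℂ V)
      ≤ finrank ℂ p + finrank ℂ q + finrank ℂ r := by
  have h1 := Submodule.finrank_sup_add_finrank_inf_eq p q
  have h2 := Submodule.finrank_sup_add_finrank_inf_eq (p ⊔ q) r
  omega

lemma pair_mul_zero {U : Type*} [AddCommGroup U] [Module ℂ U] [FiniteDimensional ℂ U]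
    (hU : finrank ℂ U = 4) (u₀ u₁ : U) (h₀ : u₀ ≠ 0)
    (z w : ExteriorAlgebra ℂ (⋀[ℂ]^2 U : Submodule ℂ (ExteriorAlgebra ℂ U)))
    (hz : IsPluckerPoint u₀ z) (hw : IsPluckerPoint u₁ w) : z * w = 0 := by
  classical
  obtain ⟨x₁, x₂, x₃, ⟨a₁, ha₁⟩, ⟨a₂, ha₂⟩, ⟨a₃, ha₃⟩, hz⟩ := hz
  obtain ⟨y₁, y₂, y₃, ⟨b₁, hb₁⟩, ⟨b₂, hb₂⟩, ⟨b₃, hb₃⟩, hw⟩ := hw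
  set f : Fin 6 → (⋀[ℂ]^2 U : Submodule ℂ (ExteriorAlgebra ℂ U)) :=
    ![x₁, x₂, x₃, y₁, y₂, y₃] with hf
  have key : z * w = ExteriorAlgebra.ιMulti ℂ 6 f := by
    rw [hz, hw, ExteriorAlgebra.ιMulti_apply]
    simp [hf, List.ofFn_succ, mul_assoc]
  rw [key]
  -- Find a subspace W of dimension ≤ 5 containing all six vectors.
  by_cases hc : u₁ ∈ Submodule.span ℂ {u₀}
  · -- u₁ is a multiple of u₀: everything lies in the range of `wedgeMap u₀`.
    obtain ⟨c, hc⟩ := Submodule.mem_span_singleton.1 hc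
    refine wedge6_zero f (LinearMap.range (wedgeMap u₀)) ?_ ?_
    · calc finrank ℂ (LinearMap.range (wedgeMap u₀)) ≤ finrank ℂ U :=
            LinearMap.finrank_range_le _
        _ ≤ 5 := by rw [hU]; omega
    · have hy : ∀ (y : (⋀[ℂ]^2 U : Submodule ℂ (ExteriorAlgebra ℂ U))) (b : U),
          (y : ExteriorAlgebra ℂ U) = ExteriorAlgebra.ι ℂ u₁ * ExteriorAlgebra.ι ℂ b →
          y ∈ LinearMap.range (wedgeMap u₀) := by
        intro y b hb
        refine ⟨c • b, ?_⟩
        refine (wedgeMap_eq ?_).symm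
        rw [hb, ← hc, map_smul, map_smul, smul_mul_assoc, mul_smul_comm]
      intro i
      fin_cases i
      · exact ⟨a₁, (wedgeMap_eq ha₁).symm⟩
      · exact ⟨a₂, (wedgeMap_eq ha₂).symm⟩
      · exact ⟨a₃, (wedgeMap_eq ha₃).symm⟩
      · exact hy y₁ b₁ hb₁
      · exact hy y₂ b₂ hb₂
      · exact hy y₃ b₃ hb₃
  · -- u₀, u₁ independent.
    set P : Submodule ℂ U := Submodule.span ℂ {u₀, u₁} with hP
    obtain ⟨T, hT⟩ := P.exists_isCompl
    set S : Submodule ℂ (⋀[ℂ]^2 U : Submodule ℂ (ExteriorAlgebra ℂ U)) :=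
      Submodule.span ℂ {wedgeMap u₀ u₁} with hS
    set W := S ⊔ T.map (wedgeMap u₀) ⊔ T.map (wedgeMap u₁) with hW
    -- dimension bounds
    have hPrank : 2 ≤ finrank ℂ P := by
      have hlt : (Submodule.span ℂ {u₀} : Submodule ℂ U) < P := by
        refine lt_of_le_of_ne (Submodule.span_mono (by simp)) fun h => hc ?_
        rw [h]; exact Submodule.subset_span (by simp)
      have := Submodule.finrank_lt_finrank_of_lt hlt
      rw [finrank_span_singleton h₀] at this
      omega
    have hTrank : finrank ℂ T ≤ 2 := by
      have := Submodule.finrank_add_eq_of_isCompl hT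
      rw [hU] at this
      omega
    have hSrank : finrank ℂ S ≤ 1 := by
      by_cases h : wedgeMap u₀ u₁ = 0
      · rw [hS, h, Submodule.span_singleton_eq_bot.2 rfl]
        simp
      · rw [hS, finrank_span_singleton h]
    have hWrank : finrank ℂ W ≤ 5 := by
      rw [hW]
      have h1 := finrank_sup3_le S (T.map (wedgeMap u₀)) (T.map (wedgeMap u₁))
      have h2 := Submodule.finrank_map_le (wedgeMap u₀) T
      have h3 := Submodule.finrank_map_le (wedgeMap u₁) T
      omega
    -- elements of the form u₀ ∧ p or u₁ ∧ p for p ∈ P lie in S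
    have hwedgeS : ∀ v : U, (v = u₀ ∨ v = u₁) → ∀ p ∈ P, wedgeMap v p ∈ S := by
      rintro v hv p hp
      obtain ⟨α, β, hab⟩ := Submodule.mem_span_pair.1 hp
      have h00 : wedgeMap u₀ u₀ = 0 :=
        Subtype.ext (by rw [wedgeMap_coe]; exact ι_sq_zero u₀)
      have h11 : wedgeMap u₁ u₁ = 0 :=
        Subtype.ext (by rw [wedgeMap_coe]; exact ι_sq_zero u₁)
      have h10 : wedgeMap u₁ u₀ = -wedgeMap u₀ u₁ := by
        refine Subtype.ext ?_
        push_cast [wedgeMap_coe]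
        exact eq_neg_of_add_eq_zero_left (ι_add_mul_swap u₁ u₀)
      rcases hv with rfl | rfl
      · have : wedgeMap v p = β • wedgeMap v u₁ := by
          rw [← hab, map_add, map_smul, map_smul, h00, smul_zero, zero_add]
        rw [this]
        exact Submodule.smul_mem _ _ (Submodule.mem_span_singleton_self _)
      · have : wedgeMap v p = (-α) • wedgeMap u₀ v := by
          rw [← hab, map_add, map_smul, map_smul, h11, smul_zero, add_zero, h10]
          module
        rw [this]
        exact Submodule.smul_mem _ _ (Submodule.mem_span_singleton_self _)
    -- every u₀ ∧ a and u₁ ∧ a lies in W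
    have hmem : ∀ v : U, (v = u₀ ∨ v = u₁) → ∀ a : U, wedgeMap v a ∈ W := by
      intro v hv a
      have ha : a ∈ P ⊔ T := by rw [hT.sup_eq_top]; trivial
      obtain ⟨p, hp, t, ht, rfl⟩ := Submodule.mem_sup.1 ha
      rw [map_add]
      refine Submodule.add_mem _ ?_ ?_
      · exact (le_sup_left.trans le_sup_left : S ≤ W) (hwedgeS v hv p hp)
      · rcases hv with rfl | rfl
        · exact (le_sup_right.trans le_sup_left : T.map (wedgeMap v) ≤ W) ⟨t, ht, rfl⟩
        · exact (le_sup_right : T.map (wedgeMap v) ≤ W) ⟨t, ht, rfl⟩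
    refine wedge6_zero f W hWrank ?_
    intro i
    fin_cases i
    · show x₁ ∈ W; rw [wedgeMap_eq ha₁]; exact hmem u₀ (Or.inl rfl) a₁
    · show x₂ ∈ W; rw [wedgeMap_eq ha₂]; exact hmem u₀ (Or.inl rfl) a₂
    · show x₃ ∈ W; rw [wedgeMap_eq ha₃]; exact hmem u₀ (Or.inl rfl) a₃
    · show y₁ ∈ W; rw [wedgeMap_eq hb₁]; exact hmem u₁ (Or.inr rfl) b₁
    · show y₂ ∈ W; rw [wedgeMap_eq hb₂]; exact hmem u₁ (Or.inr rfl) b₂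
    · show y₃ ∈ W; rw [wedgeMap_eq hb₃]; exact hmem u₁ (Or.inr rfl) b₃
/-- For a 4-dimensional complex vector space `U` and `V = ⋀²U`: for any nonzero
`u₀, u₁ ∈ U`, the Plücker points `ι₊(u₀)`, `ι₊(u₁)` of the subspaces `u₀ ∧ U`,
`u₁ ∧ U` satisfy `ι₊(u₀) ∧ ι₊(u₁) = 0` in `⋀³V`; consequently the span `A₊(U)`
of all such Plücker points is an isotropic subspace of `⋀³V`. -/
theorem statement2 (U : Type*) [AddCommGroup U] [Module ℂ U] [FiniteDimensional ℂ U]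
    (hU : finrank ℂ U = 4) :
    (∀ (u₀ u₁ : U), u₀ ≠ 0 → u₁ ≠ 0 →
      ∀ z w, IsPluckerPoint u₀ z → IsPluckerPoint u₁ w → z * w = 0) ∧
    (∀ α β, α ∈ Submodule.span ℂ {z | ∃ u : U, u ≠ 0 ∧ IsPluckerPoint u z} →
      β ∈ Submodule.span ℂ {z | ∃ u : U, u ≠ 0 ∧ IsPluckerPoint u z} →
      α * β = 0) := by
  constructor
  · intro u₀ u₁ h₀ _ z w hz hw
    exact pair_mul_zero hU u₀ u₁ h₀ z w hz hw
  · intro α β hα hβ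
    induction hα using Submodule.span_induction with
    | mem x hx =>
      induction hβ using Submodule.span_induction with
      | mem y hy =>
        obtain ⟨u, hu, hz⟩ := hx
        obtain ⟨v, hv, hw⟩ := hy
        exact pair_mul_zero hU u v hu x y hz hw
      | zero => simp
      | add y₁ y₂ _ _ h1 h2 => rw [mul_add, h1, h2, add_zero]
      | smul c y _ h => rw [mul_smul_comm, h, smul_zero]
    | zero => simp
    | add x₁ x₂ _ _ h1 h2 => rw [add_mul, h1, h2, add_zero]
    | smul c x _ h => rw [smul_mul_assoc, h, smul_zero]
end

section
/- Let E be a symplectic vector space of dimension 2n, and let A, B be Lagrangian subspaces with dim(A ∩ B) = n − 1. If F is another Lagrangian subspace such that F ∩ A and F ∩ B are both 1-dimensional, then F ∩ A = F ∩ B. -/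
/-!
Lagrangians have dimension `n`, so `A ⊓ B` is a hyperplane of `B`. If the line `F ⊓ B` lies
in `A`, it lies in `F ⊓ A` and the two lines agree. Otherwise `B = (A ⊓ B) ⊔ (F ⊓ B)`, and the
line `F ⊓ A` is orthogonal to `A ⊓ B` (both lie in the isotropic `A`) and to `F ⊓ B` (both lie
in the isotropic `F`); hence it lies in `ω.orthogonal B = B`, so again `F ⊓ A = F ⊓ B`.
-/

open Module

namespace Submodule

variable {K V : Type*} [DivisionRing K] [AddCommGroup V] [Module K V] [FiniteDimensional K V]

theorem sup_eq_of_not_le_of_finrank_eq_add_one {W L B : Submodule K V} (hW : W ≤ B)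
    (hL : L ≤ B) (hLW : ¬L ≤ W) (hB : finrank K B = finrank K W + 1) : W ⊔ L = B := by
  have hlt : W < W ⊔ L := lt_of_le_of_ne le_sup_left fun h => hLW (h ▸ le_sup_right)
  have := finrank_lt_finrank_of_lt hlt
  exact eq_of_le_of_finrank_le (sup_le hW hL) (by omega)

end Submodule

namespace LinearMap.BilinForm

variable {K V : Type*} [Field K] [AddCommGroup V] [Module K V] {ω : LinearMap.BilinForm K V}

theorem le_orthogonal_comm (hω : ω.IsRefl) {S T : Submodule K V} :
    S ≤ ω.orthogonal T ↔ T ≤ ω.orthogonal S :=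
  ⟨fun h _ ht _ hs => hω _ _ (h hs _ ht), fun h _ hs _ ht => hω _ _ (h ht _ hs)⟩

theorem le_orthogonal_of_le_of_le {W S T : Submodule K V} (hW : W ≤ ω.orthogonal W)
    (hS : S ≤ W) (hT : T ≤ W) : S ≤ ω.orthogonal T :=
  hS.trans (hW.trans (orthogonal_le hT))

theorem finrank_eq_of_eq_orthogonal [FiniteDimensional K V] (hω : ω.Nondegenerate) {n : ℕ}
    (hV : finrank K V = 2 * n) {W : Submodule K V} (hW : W = ω.orthogonal W) :
    finrank K W = n := by
  have h := finrank_orthogonal hω W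
  have hle := W.finrank_le
  rw [← hW] at h
  omega

end LinearMap.BilinForm

open LinearMap.BilinForm

/-- Let `E` be a symplectic vector space of dimension `2n`, and `A`, `B`
Lagrangian subspaces with `dim (A ∩ B) = n − 1`. If `F` is another Lagrangian
subspace such that `F ∩ A` and `F ∩ B` are both 1-dimensional, then
`F ∩ A = F ∩ B`. -/
theorem statement5 (E : Type*) [AddCommGroup E] [Module ℂ E] [FiniteDimensional ℂ E]
    (n : ℕ) (hE : finrank ℂ E = 2 * n)
    (ω : LinearMap.BilinForm ℂ E)
    (halt : ∀ x, ω x x = 0)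
    (hnd : ∀ x, (∀ y, ω x y = 0) → x = 0)
    (A B F : Submodule ℂ E)
    (hA : A = ω.orthogonal A) (hB : B = ω.orthogonal B) (hF : F = ω.orthogonal F)
    (hAB : finrank ℂ (A ⊓ B : Submodule ℂ E) = n - 1)
    (hFA : finrank ℂ (F ⊓ A : Submodule ℂ E) = 1)
    (hFB : finrank ℂ (F ⊓ B : Submodule ℂ E) = 1) :
    F ⊓ A = F ⊓ B := by
  have hrefl : ω.IsRefl := LinearMap.IsAlt.isRefl halt
  have hndg : ω.Nondegenerate := hrefl.nondegenerate_iff_separatingLeft.mpr hnd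
  have hdimA := finrank_eq_of_eq_orthogonal hndg hE hA
  have hdimB := finrank_eq_of_eq_orthogonal hndg hE hB
  have hFA_finrank_le := Submodule.finrank_mono (inf_le_right : F ⊓ A ≤ A)
  have hAB_hyperplane : finrank ℂ B = finrank ℂ (A ⊓ B : Submodule ℂ E) + 1 := by omega
  by_cases hFB_A : F ⊓ B ≤ A
  · exact (Submodule.eq_of_le_of_finrank_eq (le_inf inf_le_left hFB_A)
      (hFB.trans hFA.symm)).symm
  have hsup : (A ⊓ B) ⊔ (F ⊓ B) = B :=
    Submodule.sup_eq_of_not_le_of_finrank_eq_add_one inf_le_right inf_le_right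
      (fun h => hFB_A (h.trans inf_le_left)) hAB_hyperplane
  have hFA_B : F ⊓ A ≤ B := by
    rw [hB, ← hsup, le_orthogonal_comm hrefl]
    exact sup_le (le_orthogonal_of_le_of_le hA.le inf_le_left inf_le_right)
      (le_orthogonal_of_le_of_le hF.le inf_le_left inf_le_left)
  exact Submodule.eq_of_le_of_finrank_eq (le_inf inf_le_left hFA_B) (hFA.trans hFB.symm)
end

section
/- Let E be a symplectic vector space of dimension 2n, and let A, A' be Lagrangian subspaces with dim(A ∩ A') = n − 1. Let F be a Lagrangian subspace with dim(F ∩ A) = 1 and F ∩ A = F ∩ A'. Then A' ⊆ F + A, dim(F + A + A') = 2n − 1, and dim(F ∩ (A + A')) = 2. -/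
/-!
Since `F` and `A` are Lagrangian, `(F + A)^⊥ = F^⊥ ∩ A^⊥ = F ∩ A`, so `F + A = (F ∩ A)^⊥`.
As `F ∩ A = F ∩ A' ⊆ A'` and `A'` is Lagrangian, `A' = A'^⊥ ⊆ (F ∩ A)^⊥ = F + A`.
The dimensions then follow from `dim (U + V) + dim (U ∩ V) = dim U + dim V`, Lagrangians having
dimension `n`: `dim (F + A) = 2n - 1`, `dim (A + A') = n + 1`, and `F + (A + A') = F + A`.
-/

open Module

namespace LinearMap.BilinForm

theorem orthogonal_sup {R M : Type*} [CommSemiring R] [AddCommMonoid M] [Module R M]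
    (B : LinearMap.BilinForm R M) (U V : Submodule R M) :
    B.orthogonal (U ⊔ V) = B.orthogonal U ⊓ B.orthogonal V := by
  refine le_antisymm (le_inf (orthogonal_le le_sup_left) (orthogonal_le le_sup_right)) ?_
  rintro x ⟨hxU, hxV⟩ y hy
  obtain ⟨u, hu, v, hv, rfl⟩ := Submodule.mem_sup.1 hy
  show B (u + v) x = 0
  rw [map_add, LinearMap.add_apply, hxU u hu, hxV v hv, add_zero]

variable {K V : Type*} [Field K] [AddCommGroup V] [Module K V] [FiniteDimensional K V]
  {B : LinearMap.BilinForm K V}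

theorem two_mul_finrank_eq_of_eq_orthogonal (hB : B.Nondegenerate) {W : Submodule K V}
    (hW : W = B.orthogonal W) : 2 * finrank K W = finrank K V := by
  have h := finrank_orthogonal hB W
  have hle := Submodule.finrank_le W
  rw [← hW] at h
  omega

theorem le_sup_of_inf_le (hB : B.Nondegenerate) (hB₀ : B.IsRefl) {F A A' : Submodule K V}
    (hF : F = B.orthogonal F) (hA : A = B.orthogonal A) (hA' : A' ≤ B.orthogonal A')
    (hFA : F ⊓ A ≤ A') : A' ≤ F ⊔ A :=
  calc A' ≤ B.orthogonal A' := hA'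
    _ ≤ B.orthogonal (F ⊓ A) := orthogonal_le hFA
    _ = B.orthogonal (B.orthogonal (F ⊔ A)) := by rw [orthogonal_sup, ← hF, ← hA]
    _ = F ⊔ A := orthogonal_orthogonal hB hB₀ _

end LinearMap.BilinForm

open LinearMap.BilinForm in
/-- Let `E` be a symplectic vector space of dimension `2n`, and `A`, `A'`
Lagrangian subspaces with `dim (A ∩ A') = n − 1`. If `F` is a Lagrangian
subspace with `dim (F ∩ A) = 1` and `F ∩ A = F ∩ A'`, then `A' ⊆ F + A`,
`dim (F + A + A') = 2n − 1`, and `dim (F ∩ (A + A')) = 2`. -/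
theorem statement6 (E : Type*) [AddCommGroup E] [Module ℂ E] [FiniteDimensional ℂ E]
    (n : ℕ) (hE : finrank ℂ E = 2 * n)
    (ω : LinearMap.BilinForm ℂ E)
    (halt : ∀ x, ω x x = 0)
    (hnd : ∀ x, (∀ y, ω x y = 0) → x = 0)
    (A A' F : Submodule ℂ E)
    (hA : A = ω.orthogonal A) (hA' : A' = ω.orthogonal A') (hF : F = ω.orthogonal F)
    (hAA' : finrank ℂ (A ⊓ A' : Submodule ℂ E) = n - 1)
    (hFA1 : finrank ℂ (F ⊓ A : Submodule ℂ E) = 1)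
    (hFAA' : F ⊓ A = F ⊓ A') :
    A' ≤ F ⊔ A ∧
    finrank ℂ (F ⊔ A ⊔ A' : Submodule ℂ E) = 2 * n - 1 ∧
    finrank ℂ (F ⊓ (A ⊔ A') : Submodule ℂ E) = 2 := by
  have hrefl : ω.IsRefl := LinearMap.IsAlt.isRefl halt
  have hndg : ω.Nondegenerate := hrefl.nondegenerate_iff_separatingLeft.2 hnd
  have hdA := two_mul_finrank_eq_of_eq_orthogonal hndg hA
  have hdA' := two_mul_finrank_eq_of_eq_orthogonal hndg hA'
  have hdF := two_mul_finrank_eq_of_eq_orthogonal hndg hF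
  have hA'_le : A' ≤ F ⊔ A :=
    le_sup_of_inf_le hndg hrefl hF hA hA'.le (hFAA' ▸ inf_le_right)
  have hsup : F ⊔ A ⊔ A' = F ⊔ A := sup_eq_left.2 hA'_le
  have hFA := Submodule.finrank_sup_add_finrank_inf_eq F A
  have hAA'sup := Submodule.finrank_sup_add_finrank_inf_eq A A'
  have hFAA'sup := Submodule.finrank_sup_add_finrank_inf_eq F (A ⊔ A')
  have hn : 1 ≤ n := by
    have := Submodule.finrank_mono (inf_le_right : F ⊓ A ≤ A)
    omega
  rw [← sup_assoc] at hFAA'sup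
  rw [hsup] at hFAA'sup ⊢
  exact ⟨hA'_le, by omega, by omega⟩
end

section
/- Let E be a symplectic vector space of dimension 2n, let A, A' be Lagrangian with dim(A ∩ A') = n − 1, and let F be Lagrangian with dim(F ∩ (A + A')) = 2 and F ∩ A = F ∩ A' of dimension 1. Then B = (A ∩ A') + (F ∩ (A + A')) is the unique Lagrangian subspace in the pencil of Lagrangians containing A ∩ A' that contains F ∩ (A + A'), and dim(F ∩ B) = 2. -/
open Module

/-!
Write `U = A ∩ A'`. As `A`, `A'` are Lagrangian, `U^⊥ = (A^⊥ ∩ A'^⊥)^⊥ = A + A'`, so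
`W = F ∩ (A + A')` is an isotropic subspace of `U^⊥`; hence `B = U + W` is isotropic. As
`U ∩ W = F ∩ A ∩ A' = F ∩ A` is a line, `dim B = (n - 1) + 2 - 1 = n`, so `B` is Lagrangian.
Any `C` in the pencil containing `W` contains `B`, and has the same dimension.
-/

namespace LinearMap.BilinForm

section CommRing

variable {R M : Type*} [CommRing R] [AddCommGroup M] [Module R M] {ω : LinearMap.BilinForm R M}

theorem orthogonal_sup_s7 (N L : Submodule R M) :
    ω.orthogonal (N ⊔ L) = ω.orthogonal N ⊓ ω.orthogonal L := by
  refine le_antisymm (le_inf (orthogonal_le le_sup_left) (orthogonal_le le_sup_right)) ?_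
  rintro x ⟨hxN, hxL⟩ z hz
  obtain ⟨a, ha, b, hb, rfl⟩ := Submodule.mem_sup.mp hz
  rw [map_add, LinearMap.add_apply, hxN a ha, hxL b hb, add_zero]

theorem le_orthogonal_comm_s7 (hω : ω.IsRefl) {N L : Submodule R M} :
    N ≤ ω.orthogonal L ↔ L ≤ ω.orthogonal N :=
  ⟨fun h x hx y hy => hω x y (h hy x hx), fun h x hx y hy => hω x y (h hy x hx)⟩

theorem sup_le_orthogonal_sup (hω : ω.IsRefl) {U W : Submodule R M}
    (hU : U ≤ ω.orthogonal U) (hW : W ≤ ω.orthogonal W) (hWU : W ≤ ω.orthogonal U) :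
    U ⊔ W ≤ ω.orthogonal (U ⊔ W) := by
  rw [orthogonal_sup_s7]
  exact le_inf (sup_le hU hWU) (sup_le ((le_orthogonal_comm_s7 hω).mp hWU) hW)

end CommRing

section Field

variable {K V : Type*} [Field K] [AddCommGroup V] [Module K V] [FiniteDimensional K V]
  {ω : LinearMap.BilinForm K V}

theorem orthogonal_inf_orthogonal (hN : ω.Nondegenerate) (hω : ω.IsRefl)
    (N L : Submodule K V) : ω.orthogonal (ω.orthogonal N ⊓ ω.orthogonal L) = N ⊔ L := by
  rw [← orthogonal_sup_s7, orthogonal_orthogonal hN hω]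

theorem orthogonal_inf_eq_sup_of_eq_orthogonal (hN : ω.Nondegenerate) (hω : ω.IsRefl)
    {A A' : Submodule K V} (hA : A = ω.orthogonal A) (hA' : A' = ω.orthogonal A') :
    ω.orthogonal (A ⊓ A') = A ⊔ A' := by
  conv_lhs => rw [hA, hA']
  exact orthogonal_inf_orthogonal hN hω A A'

theorem two_mul_finrank_of_eq_orthogonal (hN : ω.Nondegenerate) {W : Submodule K V}
    (hW : W = ω.orthogonal W) : 2 * finrank K W = finrank K V := by
  have h := finrank_orthogonal hN W
  rw [← hW] at h
  have := W.finrank_le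
  omega

theorem eq_orthogonal_of_le_orthogonal (hN : ω.Nondegenerate) {W : Submodule K V}
    (hW : W ≤ ω.orthogonal W) (hdim : 2 * finrank K W = finrank K V) :
    W = ω.orthogonal W :=
  Submodule.eq_of_le_of_finrank_le hW (by rw [finrank_orthogonal hN]; omega)

end Field

end LinearMap.BilinForm

theorem inf_inf_inf_sup_eq_of_inf_eq {α : Type*} [Lattice α] {a a' f : α}
    (h : f ⊓ a = f ⊓ a') : a ⊓ a' ⊓ (f ⊓ (a ⊔ a')) = f ⊓ a := by
  rw [inf_comm, inf_assoc, inf_of_le_right (inf_le_sup : a ⊓ a' ≤ a ⊔ a'), ← inf_assoc, h,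
    inf_assoc, inf_idem]

/-- Let `E` be a symplectic vector space of dimension `2n`, `A`, `A'` Lagrangian
with `dim (A ∩ A') = n − 1`, and `F` Lagrangian with `dim (F ∩ (A + A')) = 2`
and `F ∩ A = F ∩ A'` of dimension 1. Then `B = (A ∩ A') + (F ∩ (A + A'))` is
the unique Lagrangian subspace in the pencil of Lagrangians containing `A ∩ A'`
(the `n`-dimensional subspaces between `A ∩ A'` and `(A ∩ A')^⊥`) that contains
`F ∩ (A + A')`, and `dim (F ∩ B) = 2`. -/
theorem statement7 (E : Type*) [AddCommGroup E] [Module ℂ E] [FiniteDimensional ℂ E]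
    (n : ℕ) (hE : finrank ℂ E = 2 * n)
    (ω : LinearMap.BilinForm ℂ E)
    (halt : ∀ x, ω x x = 0)
    (hnd : ∀ x, (∀ y, ω x y = 0) → x = 0)
    (A A' F : Submodule ℂ E)
    (hA : A = ω.orthogonal A) (hA' : A' = ω.orthogonal A') (hF : F = ω.orthogonal F)
    (hAA' : finrank ℂ (A ⊓ A' : Submodule ℂ E) = n - 1)
    (hFA1 : finrank ℂ (F ⊓ A : Submodule ℂ E) = 1)
    (hFAA' : F ⊓ A = F ⊓ A')
    (hF2 : finrank ℂ (F ⊓ (A ⊔ A') : Submodule ℂ E) = 2)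
    (B : Submodule ℂ E) (hBdef : B = (A ⊓ A') ⊔ (F ⊓ (A ⊔ A'))) :
    B = ω.orthogonal B ∧
    A ⊓ A' ≤ B ∧ B ≤ ω.orthogonal (A ⊓ A') ∧ finrank ℂ B = n ∧
    F ⊓ (A ⊔ A') ≤ B ∧
    finrank ℂ (F ⊓ B : Submodule ℂ E) = 2 ∧
    (∀ C : Submodule ℂ E, A ⊓ A' ≤ C → C ≤ ω.orthogonal (A ⊓ A') →
      finrank ℂ C = n → F ⊓ (A ⊔ A') ≤ C → C = B) := by
  have hω : ω.IsRefl := LinearMap.IsAlt.isRefl halt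
  have hN : ω.Nondegenerate := hω.nondegenerate_iff_separatingLeft.mpr hnd
  have hpencil : ω.orthogonal (A ⊓ A') = A ⊔ A' :=
    LinearMap.BilinForm.orthogonal_inf_eq_sup_of_eq_orthogonal hN hω hA hA'
  have hBle : B ≤ A ⊔ A' := hBdef ▸ sup_le (inf_le_left.trans le_sup_left) inf_le_right
  have hFB : F ⊓ (A ⊔ A') ≤ B := hBdef ▸ le_sup_right
  have hdimA : 2 * finrank ℂ A = finrank ℂ E :=
    LinearMap.BilinForm.two_mul_finrank_of_eq_orthogonal hN hA
  have hdimB : finrank ℂ B = n := by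
    have hn : 1 ≤ n := by
      have := Submodule.finrank_mono (inf_le_right : F ⊓ A ≤ A)
      omega
    have h := Submodule.finrank_sup_add_finrank_inf_eq (A ⊓ A') (F ⊓ (A ⊔ A'))
    rw [inf_inf_inf_sup_eq_of_inf_eq hFAA', hFA1, hAA', hF2, ← hBdef] at h
    omega
  have hBiso : B ≤ ω.orthogonal B := hBdef ▸ LinearMap.BilinForm.sup_le_orthogonal_sup hω
    (hpencil ▸ inf_le_sup) (inf_le_left.trans (hF.le.trans (ω.orthogonal_le inf_le_left)))
    (hpencil ▸ inf_le_right)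
  refine ⟨LinearMap.BilinForm.eq_orthogonal_of_le_orthogonal hN hBiso (by omega),
    hBdef ▸ le_sup_left, hpencil ▸ hBle, hdimB, hFB, ?_, fun C hUC _ hC hFC => ?_⟩
  · rw [le_antisymm (inf_le_inf_left F hBle) (le_inf inf_le_left hFB), hF2]
  · exact (Submodule.eq_of_le_of_finrank_le (hBdef ▸ sup_le hUC hFC)
      (hC.trans hdimB.symm).le).symm
end

section
/- Let B be an n-dimensional complex vector space containing vectors α₁, …, α_k that are linearly independent, and let U ⊂ B be a hyperplane with α_i ∉ U for all i. Let T = {q ∈ Sym²(B∨) : q(α_i) = 0 for i = 1, …, k}. Then the restriction map T → Sym²(U∨) is injective. -/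
open Module

/-- Let `B` be an `n`-dimensional complex vector space containing linearly
independent vectors `α₁, …, α_n`, and let `U ⊂ B` be a hyperplane with
`α_i ∉ U` for all `i`. Then the restriction map from
`T = {q ∈ Sym²(B∨) : q(α_i) = 0 for all i}` to `Sym²(U∨)` is injective:
a quadratic form in `T` vanishing on `U` is zero. -/
theorem statement11 (B : Type*) [AddCommGroup B] [Module ℂ B] [FiniteDimensional ℂ B]
    (n : ℕ) (hB : finrank ℂ B = n)
    (α : Fin n → B) (hα : LinearIndependent ℂ α)
    (U : Submodule ℂ B) (hU : finrank ℂ U = n - 1)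
    (hαU : ∀ i, α i ∉ U) :
    ∀ q : QuadraticForm ℂ B, (∀ i, q (α i) = 0) → (∀ u ∈ U, q u = 0) → q = 0 := by
  intro q hqα hqU
  rcases Nat.eq_zero_or_pos n with hn | hn
  · subst hn
    have hs : Subsingleton B := by
      rw [← Module.finrank_zero_iff (R := ℂ)]; exact hB
    ext x
    rw [Subsingleton.elim x (0 : B)]
    simp
  · haveI : Nonempty (Fin n) := ⟨⟨0, hn⟩⟩
    set v := α ⟨0, hn⟩ with hv
    have hvU : v ∉ U := hαU _
    have hqv : q v = 0 := hqα _
    -- U ⊔ span v = ⊤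
    have htop : U ⊔ (ℂ ∙ v) = ⊤ := by
      have h1 : U < U ⊔ (ℂ ∙ v) := lt_of_le_of_ne le_sup_left (by
        intro h
        exact hvU (h ▸ Submodule.mem_sup_right (Submodule.mem_span_singleton_self v)))
      have h2 : finrank ℂ U < finrank ℂ (U ⊔ (ℂ ∙ v) : Submodule ℂ B) :=
        Submodule.finrank_lt_finrank_of_lt h1
      have h3 : finrank ℂ (U ⊔ (ℂ ∙ v) : Submodule ℂ B) ≤ n := by
        rw [← hB]; exact Submodule.finrank_le _
      have h4 : finrank ℂ (U ⊔ (ℂ ∙ v) : Submodule ℂ B) = n := by omega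
      exact Submodule.eq_top_of_finrank_eq (by rw [h4, hB])
    have hdecomp : ∀ x : B, ∃ u ∈ U, ∃ t : ℂ, x = u + t • v := by
      intro x
      have hx : x ∈ U ⊔ (ℂ ∙ v) := htop ▸ Submodule.mem_top
      rcases Submodule.mem_sup.mp hx with ⟨u, hu, z, hz, huz⟩
      rcases Submodule.mem_span_singleton.mp hz with ⟨t, ht⟩
      exact ⟨u, hu, t, by rw [← huz, ← ht]⟩
    -- polar q x v = 0 for all x
    have hpolarU : ∀ u ∈ U, ∀ c : ℂ, c ≠ 0 → q (u + c • v) = 0 →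
        QuadraticMap.polar q u v = 0 := by
      intro u hu c hc h
      have h2 := QuadraticMap.map_add (⇑q) u (c • v)
      rw [h, QuadraticMap.map_smul, QuadraticMap.polar_smul_right, hqv, hqU u hu] at h2
      have h3 : c • QuadraticMap.polar q u v = 0 := by simpa using h2.symm
      exact (smul_eq_zero.mp h3).resolve_left hc
    have hpolar : ∀ x : B, QuadraticMap.polar q x v = 0 := by
      have hb : ∀ i, QuadraticMap.polar q (α i) v = 0 := by
        intro i
        rcases hdecomp (α i) with ⟨u, hu, c, hc⟩
        have hc0 : c ≠ 0 := by
          intro h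
          apply hαU i
          rw [hc, h, zero_smul, add_zero]; exact hu
        have hpu : QuadraticMap.polar q u v = 0 :=
          hpolarU u hu c hc0 (hc ▸ hqα i)
        rw [hc, QuadraticMap.polar_add_left, QuadraticMap.polar_smul_left,
          QuadraticMap.polar_self, hqv, hpu]
        simp
      intro x
      have hx : x ∈ Submodule.span ℂ (Set.range α) := by
        rw [hα.span_eq_top_of_card_eq_finrank (by simp [hB])]
        exact Submodule.mem_top
      induction hx using Submodule.span_induction with
      | mem y hy => rcases hy with ⟨i, rfl⟩; exact hb i
      | zero => simp [QuadraticMap.polar]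
      | add y z _ _ hy hz => rw [QuadraticMap.polar_add_left, hy, hz, add_zero]
      | smul c y _ hy => rw [QuadraticMap.polar_smul_left, hy]; simp
    ext x
    rcases hdecomp x with ⟨u, hu, t, rfl⟩
    have h2 := QuadraticMap.map_add (⇑q) u (t • v)
    rw [QuadraticMap.map_smul, QuadraticMap.polar_smul_right, hqv, hqU u hu, hpolar u] at h2
    simpa using h2
end

section
/- In the ℂ[x, y]-module M = (ℂ[x,y]·dx ⊕ ℂ[x,y]·dy) / ⟨x·dx, x·dy + y·dx, y·dy⟩, the annihilator of M is the ideal (x², xy, y²), i.e. the square of the maximal ideal (x, y). -/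
/-!
Every relation `a dx + b dy` in `N = ⟨x dx, d(xy), y dy⟩` vanishes at the origin and so does its
exterior derivative `(∂b/∂x - ∂a/∂y) dx ∧ dy`: the generators are exact forms vanishing at the
origin, and `d(p ω) = dp ∧ ω + p dω`. If `h` kills `M`, both `h dx` and `h dy` lie in `N`, which forces the constant and the
linear coefficients of `h` to vanish, i.e. `h ∈ (x, y)²`. Conversely each of `x², xy, y²` times
`dx` or `dy` is an explicit combination of the three generators.
-/

open MvPolynomial

theorem Finsupp.exists_eq_single_of_degree_eq_one {σ : Type*} {d : σ →₀ ℕ} (h : d.degree = 1) :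
    ∃ i, d = Finsupp.single i 1 := by
  classical
  have : Multiset.card (Finsupp.toMultiset d) = 1 := by
    rw [Finsupp.card_toMultiset, ← h]; rfl
  obtain ⟨i, hi⟩ := Multiset.card_eq_one.mp this
  exact ⟨i, by rw [← Finsupp.toMultiset_toFinsupp d, hi]; simp⟩

theorem Submodule.mem_colon_univ_prod_iff {A : Type*} [CommSemiring A] {N : Submodule A (A × A)}
    {h : A} : h ∈ N.colon Set.univ ↔ (h, 0) ∈ N ∧ (0, h) ∈ N := by
  rw [Submodule.mem_colon]
  refine ⟨fun H => ⟨by simpa using H (1, 0) trivial, by simpa using H (0, 1) trivial⟩, ?_⟩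
  rintro ⟨h₁, h₂⟩ ⟨a, b⟩ -
  have : h • (a, b) = a • (h, 0) + b • (0, h) := by ext <;> simp [mul_comm]
  rw [this]
  exact N.add_mem (N.smul_mem a h₁) (N.smul_mem b h₂)

namespace MvPolynomial

variable {σ R : Type*} [CommSemiring R]

theorem constantCoeff_pderiv (i : σ) (p : MvPolynomial σ R) :
    constantCoeff (pderiv i p) = coeff (Finsupp.single i 1) p := by
  simp [constantCoeff_eq, coeff_pderiv]

theorem mem_idealOfVars_sq_iff {p : MvPolynomial σ R} :
    p ∈ idealOfVars σ R ^ 2 ↔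
      constantCoeff p = 0 ∧ ∀ i, coeff (Finsupp.single i 1) p = 0 := by
  rw [mem_pow_idealOfVars_iff', constantCoeff_eq]
  refine ⟨fun H => ⟨H 0 (by simp), fun i => H _ (by simp)⟩, fun ⟨h₀, h₁⟩ d hd => ?_⟩
  obtain hd | hd : d.degree = 0 ∨ d.degree = 1 := by omega
  · rwa [(Finsupp.degree_eq_zero_iff d).mp hd]
  · obtain ⟨i, rfl⟩ := Finsupp.exists_eq_single_of_degree_eq_one hd
    exact h₁ i

theorem span_X_zero_X_one : Ideal.span {X 0, X 1} = idealOfVars (Fin 2) R := by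
  rw [idealOfVars]
  congr 1
  ext
  simp [Fin.exists_fin_two, eq_comm]

theorem span_sq_X_zero_X_one : Ideal.span {X 0 ^ 2, X 0 * X 1, X 1 ^ 2} =
    (Ideal.span {X 0, X 1} : Ideal (MvPolynomial (Fin 2) R)) ^ 2 := by
  rw [sq (Ideal.span _), Ideal.span_mul_span']
  congr 1
  ext
  simp only [Set.mem_insert_iff, Set.mem_singleton_iff, Set.mem_mul, exists_eq_or_imp,
    exists_eq_left]
  grind

end MvPolynomial

section

variable (R : Type*) [CommSemiring R]

noncomputable def dxdyRelations :
    Submodule (MvPolynomial (Fin 2) R) (MvPolynomial (Fin 2) R × MvPolynomial (Fin 2) R) :=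
  Submodule.span _ {(X 0, 0), (X 1, X 0), (0, X 1)}

/-- Pairs `(a, b)`, read as 1-forms `a dx + b dy`, that vanish at the origin together with their
exterior derivative `(∂b/∂x - ∂a/∂y) dx ∧ dy`. -/
noncomputable def closedAtOrigin :
    Submodule (MvPolynomial (Fin 2) R) (MvPolynomial (Fin 2) R × MvPolynomial (Fin 2) R) where
  carrier := {v | constantCoeff v.1 = 0 ∧ constantCoeff v.2 = 0 ∧
    constantCoeff (pderiv 1 v.1) = constantCoeff (pderiv 0 v.2)}
  add_mem' := by
    rintro u v ⟨hu₁, hu₂, hu⟩ ⟨hv₁, hv₂, hv⟩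
    exact ⟨by simp [hu₁, hv₁], by simp [hu₂, hv₂], by simp [hu, hv]⟩
  zero_mem' := by simp
  smul_mem' := by
    rintro p v ⟨hv₁, hv₂, hv⟩
    exact ⟨by simp [hv₁], by simp [hv₂], by simp [hv₁, hv₂, hv]⟩

variable {R}

theorem dxdyRelations_le_closedAtOrigin : dxdyRelations R ≤ closedAtOrigin R := by
  rw [dxdyRelations, Submodule.span_le]
  rintro v (rfl | rfl | rfl) <;> simp [closedAtOrigin, pderiv_X]

theorem colon_dxdyRelations_le :
    (dxdyRelations R).colon Set.univ ≤ Ideal.span {X 0, X 1} ^ 2 := by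
  intro h hh
  obtain ⟨h₁, h₂⟩ := Submodule.mem_colon_univ_prod_iff.mp hh
  obtain ⟨hc, -, hy⟩ := dxdyRelations_le_closedAtOrigin h₁
  obtain ⟨-, -, hx⟩ := dxdyRelations_le_closedAtOrigin h₂
  simp only [map_zero, constantCoeff_pderiv] at hx hy
  rw [span_X_zero_X_one, mem_idealOfVars_sq_iff, Fin.forall_fin_two]
  exact ⟨hc, hx.symm, hy⟩

end

section

variable {R : Type*} [CommRing R]

theorem span_sq_le_colon_dxdyRelations :
    Ideal.span {X 0 ^ 2, X 0 * X 1, X 1 ^ 2} ≤ (dxdyRelations R).colon Set.univ := by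
  have hx : (X 0, 0) ∈ dxdyRelations R := Submodule.subset_span (by simp)
  have hxy : (X 1, X 0) ∈ dxdyRelations R := Submodule.subset_span (by simp)
  have hy : (0, X 1) ∈ dxdyRelations R := Submodule.subset_span (by simp)
  rw [Ideal.span_le]
  rintro g (rfl | rfl | rfl) <;> refine Submodule.mem_colon_univ_prod_iff.mpr ⟨?_, ?_⟩
  · simpa [sq] using Submodule.smul_mem _ (X 0) hx
  · simpa [sq, mul_comm] using Submodule.sub_mem _ (Submodule.smul_mem _ (X 0) hxy)
      (Submodule.smul_mem _ (X 1) hx)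
  · simpa [mul_comm] using Submodule.smul_mem _ (X 1) hx
  · simpa using Submodule.smul_mem _ (X 0) hy
  · simpa [sq, mul_comm] using Submodule.sub_mem _ (Submodule.smul_mem _ (X 1) hxy)
      (Submodule.smul_mem _ (X 0) hy)
  · simpa [sq] using Submodule.smul_mem _ (X 1) hy

theorem colon_dxdyRelations :
    (dxdyRelations R).colon Set.univ = Ideal.span {X 0, X 1} ^ 2 :=
  colon_dxdyRelations_le.antisymm (span_sq_X_zero_X_one (R := R) ▸ span_sq_le_colon_dxdyRelations)

end

/-- In the `ℂ[x,y]`-module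
`M = (ℂ[x,y]·dx ⊕ ℂ[x,y]·dy) / ⟨x·dx, x·dy + y·dx, y·dy⟩`
(with `dx, dy` the standard basis of the free module of rank 2, so that
`x·dx = (x, 0)`, `x·dy + y·dx = (y, x)`, `y·dy = (0, y)`), the annihilator of
`M` is the ideal `(x², xy, y²)`, i.e. the square of the maximal ideal
`(x, y)`. -/
theorem statement13
    (N : Submodule (MvPolynomial (Fin 2) ℂ)
      (MvPolynomial (Fin 2) ℂ × MvPolynomial (Fin 2) ℂ))
    (hN : N = Submodule.span (MvPolynomial (Fin 2) ℂ)
      {(X 0, 0), (X 1, X 0), (0, X 1)}) :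
    (∀ h : MvPolynomial (Fin 2) ℂ,
      (∀ m : (MvPolynomial (Fin 2) ℂ × MvPolynomial (Fin 2) ℂ) ⧸ N, h • m = 0) ↔
        h ∈ Ideal.span {X 0 ^ 2, X 0 * X 1, X 1 ^ 2}) ∧
    (Ideal.span {X 0 ^ 2, X 0 * X 1, X 1 ^ 2} : Ideal (MvPolynomial (Fin 2) ℂ))
      = Ideal.span {X 0, X 1} ^ 2 := by
  subst hN
  refine ⟨fun h => ?_, span_sq_X_zero_X_one⟩
  rw [← Module.mem_annihilator, Submodule.annihilator_quotient, span_sq_X_zero_X_one]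
  exact SetLike.ext_iff.mp colon_dxdyRelations h
end
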